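/- arXiv:2102.03118 — 5 statements merged into one kernel-verified Lean document; each statement's English description precedes it below -/
import Mathlib

section
/- Let X be a linearly ordered set and α : X → X an orientation-preserving transformation with ideal X₁ and X₂ = X \ X₁. If α(X₁) ∩ α(X₂) ≠ ∅, then α(X₁) ∩ α(X₂) = {c} for some c ∈ X; moreover c is the minimum of α(X₁) and the maximum of α(X₂). -/
/-- `α : X → X` is orientation-preserving with ideal `X₁`. -/
def IsOrientationPreserving {X : Type*} [LinearOrder X] (α : X → X) (X₁ : Set X) : Prop :=
  X₁.Nonempty ∧
  (∀ x ∈ X₁, ∀ y ∈ X₁, x ≤ y → α x ≤ α y) ∧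
  (∀ x ∈ X₁ᶜ, ∀ y ∈ X₁ᶜ, x ≤ y → α x ≤ α y) ∧
  (∀ a ∈ X₁, ∀ b ∈ X₁ᶜ, a < b ∧ α b ≤ α a)

theorem image_intersection_singleton {X : Type*} [LinearOrder X] (α : X → X) (X₁ : Set X)
    (h : IsOrientationPreserving α X₁)
    (hne : (α '' X₁ ∩ α '' X₁ᶜ).Nonempty) :
    ∃ c : X, α '' X₁ ∩ α '' X₁ᶜ = {c} ∧ IsLeast (α '' X₁) c ∧ IsGreatest (α '' X₁ᶜ) c := by
  obtain ⟨_, _, _, h4⟩ := h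
  obtain ⟨c, ⟨a, ha, hac⟩, ⟨b, hb, hbc⟩⟩ := hne
  have hleast : IsLeast (α '' X₁) c := by
    refine ⟨⟨a, ha, hac⟩, ?_⟩
    rintro _ ⟨x, hx, rfl⟩
    calc c = α b := hbc.symm
    _ ≤ α x := (h4 x hx b hb).2
  have hgreat : IsGreatest (α '' X₁ᶜ) c := by
    refine ⟨⟨b, hb, hbc⟩, ?_⟩
    rintro _ ⟨y, hy, rfl⟩
    calc α y ≤ α a := (h4 a ha y hy).2
    _ = c := hac
  refine ⟨c, ?_, hleast, hgreat⟩
  ext d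
  simp only [Set.mem_singleton_iff, Set.mem_inter_iff]
  constructor
  · rintro ⟨hd1, hd2⟩
    exact le_antisymm (hgreat.2 hd2) (hleast.2 hd1)
  · rintro rfl
    exact ⟨hleast.1, hgreat.1⟩
end

section
/- Let X be a linearly ordered set such that every decomposition X = X' ∪ X'' with X' < X'' and both nonempty satisfies: X' has a maximum or X'' has a minimum. Let Y ⊆ X have no minimum and no maximum, and let α : X → X be an orientation-preserving but not order-preserving transformation with image contained in Y. Then there exists h ∈ Y with {y ∈ Y : y > h} ∩ image(α) = ∅, or there exists l ∈ Y with {y ∈ Y : y < l} ∩ image(α) = ∅. -/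
theorem corollary_restricted_range {X : Type*} [LinearOrder X]
    (hcut : ∀ X' X'' : Set X, X' ∪ X'' = Set.univ → (∀ a ∈ X', ∀ b ∈ X'', a < b) →
      X'.Nonempty → X''.Nonempty → (∃ m, IsGreatest X' m) ∨ (∃ m, IsLeast X'' m))
    (Y : Set X) (hYmin : ∀ y ∈ Y, ∃ z ∈ Y, z < y) (hYmax : ∀ y ∈ Y, ∃ z ∈ Y, y < z)
    (α : X → X) (X₁ : Set X) (h : IsOrientationPreserving α X₁)
    (hnm : ¬ Monotone α) (hrange : Set.range α ⊆ Y) :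
    (∃ h₀ ∈ Y, {y ∈ Y | h₀ < y} ∩ Set.range α = ∅) ∨
    (∃ l ∈ Y, {y ∈ Y | y < l} ∩ Set.range α = ∅) := by
  obtain ⟨h1, h2, h3, h4⟩ := h
  -- X₁ᶜ is nonempty, else α is monotone
  have hX2 : (X₁ᶜ).Nonempty := by
    by_contra hc
    rw [Set.not_nonempty_iff_eq_empty] at hc
    have hX1 : X₁ = Set.univ := by
      rw [← Set.compl_empty, ← hc, compl_compl]
    exact hnm fun x y hxy => h2 x (hX1 ▸ Set.mem_univ x) y (hX1 ▸ Set.mem_univ y) hxy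
  have hlt : ∀ a ∈ X₁, ∀ b ∈ X₁ᶜ, a < b := fun a ha b hb => (h4 a ha b hb).1
  rcases hcut X₁ X₁ᶜ (Set.union_compl_self X₁) hlt h1 hX2 with ⟨m, hm, hub⟩ | ⟨m, hm, hlb⟩
  · -- α m is an upper bound of the range
    left
    refine ⟨α m, hrange ⟨m, rfl⟩, ?_⟩
    ext y
    simp only [Set.mem_inter_iff, Set.mem_setOf_eq, Set.mem_empty_iff_false, iff_false,
      not_and, Set.mem_range]
    rintro ⟨_, hy⟩ ⟨x, rfl⟩
    have hle : α x ≤ α m := by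
      by_cases hx : x ∈ X₁
      · exact h2 x hx m hm (hub hx)
      · exact (h4 m hm x hx).2
    exact absurd hy (not_lt.mpr hle)
  · -- α m is a lower bound of the range
    right
    refine ⟨α m, hrange ⟨m, rfl⟩, ?_⟩
    ext y
    simp only [Set.mem_inter_iff, Set.mem_setOf_eq, Set.mem_empty_iff_false, iff_false,
      not_and, Set.mem_range]
    rintro ⟨_, hy⟩ ⟨x, rfl⟩
    have hle : α m ≤ α x := by
      by_cases hx : x ∈ X₁
      · exact (h4 x hx m hm).2
      · exact h3 m hm x hx (hlb hx)
    exact absurd hy (not_lt.mpr hle)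
end

section
/- Let α : X → X be a non-constant orientation-preserving transformation of a linearly ordered set X. Then α admits a unique ideal: if X₁ and X₁' are both ideals of α, then X₁ = X₁'. -/
lemma const_of_diff {X : Type*} [LinearOrder X] (α : X → X) (X₁ X₁' : Set X)
    (h : IsOrientationPreserving α X₁) (h' : IsOrientationPreserving α X₁')
    (c : X) (hc : c ∈ X₁) (hc' : c ∉ X₁') : ∀ x, α x = α c := by
  obtain ⟨hne, hmono, hmonoc, hpair⟩ := h
  obtain ⟨hne', hmono', hmonoc', hpair'⟩ := h'
  -- X₁' ⊆ X₁
  have hsub : X₁' ⊆ X₁ := by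
    intro x hx
    by_contra hxn
    have h1 := hpair c hc x hxn
    have h2 := hpair' x hx c hc'
    exact absurd (h1.1.trans h2.1) (lt_irrefl c)
  -- every element of X₁' maps to α c
  have key1 : ∀ a ∈ X₁', α a = α c := by
    intro a ha
    have h1 := hpair' a ha c hc'
    exact le_antisymm (hmono a (hsub ha) c hc h1.1.le) h1.2
  intro x
  by_cases hx' : x ∈ X₁'
  · exact key1 x hx'
  by_cases hx : x ∈ X₁
  · obtain ⟨a, ha⟩ := hne'
    have h1 := hpair' a ha x hx'
    have h2 := hmono a (hsub ha) x hx h1.1.le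
    rw [← key1 a ha]
    exact le_antisymm h1.2 h2
  · have h1 := hpair c hc x hx
    have h2 := hmonoc' c hc' x hx' h1.1.le
    exact le_antisymm h1.2 h2

theorem unique_ideal {X : Type*} [LinearOrder X] (α : X → X)
    (hnc : ∃ x y : X, α x ≠ α y) (X₁ X₁' : Set X)
    (h : IsOrientationPreserving α X₁) (h' : IsOrientationPreserving α X₁') :
    X₁ = X₁' := by
  obtain ⟨x, y, hxy⟩ := hnc
  ext z
  constructor
  · intro hz
    by_contra hz'
    have hconst := const_of_diff α X₁ X₁' h h' z hz hz'
    exact hxy ((hconst x).trans (hconst y).symm)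
  · intro hz
    by_contra hz'
    have hconst := const_of_diff α X₁' X₁ h' h z hz hz'
    exact hxy ((hconst x).trans (hconst y).symm)
end

section
/- Let X be a linearly ordered set. The set OP(X) of orientation-preserving transformations of X is closed under composition with order-preserving maps on the left: if β : X → X is order-preserving and α : X → X is orientation-preserving with ideal X₁, then β ∘ α (in right-action notation, i.e. the map x ↦ α(β(x)), first β, then α) is orientation-preserving. -/
theorem left_compose_order_preserving {X : Type*} [LinearOrder X]
    (β α : X → X) (hβ : Monotone β) (X₁ : Set X) (h : IsOrientationPreserving α X₁) :
    ∃ X₁' : Set X, IsOrientationPreserving (fun x => α (β x)) X₁' := by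
  obtain ⟨hne, h1, h2, h3⟩ := h
  by_cases hpre : (β ⁻¹' X₁).Nonempty
  · refine ⟨β ⁻¹' X₁, hpre, ?_, ?_, ?_⟩
    · intro x hx y hy hxy
      exact h1 _ hx _ hy (hβ hxy)
    · intro x hx y hy hxy
      exact h2 _ hx _ hy (hβ hxy)
    · intro a ha b hb
      have key := h3 _ ha _ hb
      constructor
      · by_contra hab
        push_neg at hab
        exact absurd (hβ hab) (not_le.mpr key.1)
      · exact key.2
  · refine ⟨Set.univ, ⟨hne.some, trivial⟩, ?_, ?_, ?_⟩
    · intro x _ y _ hxy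
      have hx : β x ∈ X₁ᶜ := fun hmem => hpre ⟨x, hmem⟩
      have hy : β y ∈ X₁ᶜ := fun hmem => hpre ⟨y, hmem⟩
      exact h2 _ hx _ hy (hβ hxy)
    · intro x hx
      exact absurd (Set.mem_univ x) hx
    · intro a _ b hb
      exact absurd (Set.mem_univ b) hb
end

section
/- Let X be a linearly ordered set with minimum a and maximum b, and let p, q ∈ X with a < p < q < b. Suppose σ₁ : [a,p) → [q,b) and σ₂ : [p,b] → [a,p] are order-isomorphisms. Define α : X → X by α(x) = σ₁(x) for x ∈ [a,p) and α(x) = σ₂(x) for x ∈ [p,b]. Then α is an injective orientation-preserving transformation with ideal [a,p), and α is not order-preserving. -/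
theorem alpha_injective_op {X : Type*} [LinearOrder X] (a b p q : X)
    (ha : ∀ x : X, a ≤ x) (hb : ∀ x : X, x ≤ b)
    (hap : a < p) (hpq : p < q) (hqb : q < b)
    (σ₁ : Set.Ico a p ≃o Set.Ico q b) (σ₂ : Set.Icc p b ≃o Set.Icc a p) (α : X → X)
    (hα1 : ∀ x (hx : x ∈ Set.Ico a p), α x = σ₁ ⟨x, hx⟩)
    (hα2 : ∀ x (hx : x ∈ Set.Icc p b), α x = σ₂ ⟨x, hx⟩) :
    Function.Injective α ∧ IsOrientationPreserving α (Set.Ico a p) ∧ ¬ Monotone α := by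
  have hcompl : ∀ x : X, x ∉ Set.Ico a p → x ∈ Set.Icc p b := by
    intro x hx
    exact ⟨le_of_not_gt fun h => hx ⟨ha x, h⟩, hb x⟩
  -- images
  have him1 : ∀ x (hx : x ∈ Set.Ico a p), α x ∈ Set.Ico q b := by
    intro x hx; rw [hα1 x hx]; exact (σ₁ ⟨x, hx⟩).2
  have him2 : ∀ x (hx : x ∈ Set.Icc p b), α x ∈ Set.Icc a p := by
    intro x hx; rw [hα2 x hx]; exact (σ₂ ⟨x, hx⟩).2
  refine ⟨?_, ⟨⟨a, ⟨le_refl a, hap⟩⟩, ?_, ?_, ?_⟩, ?_⟩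
  · intro x y hxy
    by_cases hx : x ∈ Set.Ico a p <;> by_cases hy : y ∈ Set.Ico a p
    · have := hα1 x hx ▸ hα1 y hy ▸ hxy
      have : (σ₁ ⟨x, hx⟩ : X) = σ₁ ⟨y, hy⟩ := this
      have := σ₁.injective (Subtype.ext this)
      exact congrArg Subtype.val this
    · exact absurd (hxy ▸ him1 x hx).1 (not_le.mpr (lt_of_le_of_lt (him2 y (hcompl y hy)).2 hpq))
    · exact absurd (hxy ▸ him2 x (hcompl x hx)).2
        (not_le.mpr (lt_of_lt_of_le hpq (him1 y hy).1))
    · have hx' := hcompl x hx; have hy' := hcompl y hy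
      have := hα2 x hx' ▸ hα2 y hy' ▸ hxy
      have : (σ₂ ⟨x, hx'⟩ : X) = σ₂ ⟨y, hy'⟩ := this
      exact congrArg Subtype.val (σ₂.injective (Subtype.ext this))
  · intro x hx y hy hxy
    rw [hα1 x hx, hα1 y hy]
    exact_mod_cast σ₁.monotone (show (⟨x, hx⟩ : Set.Ico a p) ≤ ⟨y, hy⟩ from hxy)
  · intro x hx y hy hxy
    have hx' := hcompl x hx; have hy' := hcompl y hy
    rw [hα2 x hx', hα2 y hy']
    exact_mod_cast σ₂.monotone (show (⟨x, hx'⟩ : Set.Icc p b) ≤ ⟨y, hy'⟩ from hxy)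
  · intro u hu v hv
    have hv' := hcompl v hv
    exact ⟨lt_of_lt_of_le hu.2 hv'.1,
      le_trans (him2 v hv').2 (le_trans hpq.le (him1 u hu).1)⟩
  · intro hmono
    have h1 := him1 a ⟨le_refl a, hap⟩
    have h2 := him2 p ⟨le_refl p, hb p⟩
    have := hmono (hap.le)
    exact absurd (le_trans h1.1 this) (not_le.mpr (lt_of_le_of_lt h2.2 hpq))
end
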